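/- Assume there exists an integer ℓ₀ ≥ 1 such that for each τ ∈ Δ(F) the operator (𝒞 − (‖λ+τ‖² − ‖ρ‖²)·id)^{ℓ₀} vanishes on N_τ, and assume moreover that 𝒞 acts on N_{ε e_i} by scalar multiplication with ‖λ+εe_i‖² − ‖ρ‖². Then for every integer N ≥ ℓ₀ one has φ^N = φ_{i,ε}(λ)^N · P as operators on M⊗F, where P : M⊗F → M⊗F is the linear projection onto N_{ε e_i} along ⊕_{τ ∈ Δ(F), τ ≠ ε e_i} N_τ. -/

import Mathlib

set_option maxHeartbeats 1000000
set_option synthInstance.maxHeartbeats 400000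

noncomputable section

open scoped BigOperators TensorProduct
open Matrix

attribute [local instance 100] LieRing.ofAssociativeRing

/-- The Lie algebra 𝔬(n+1,ℂ) of skew-symmetric complex matrices. -/
abbrev so (n : ℕ) : LieSubalgebra ℂ (Matrix (Fin (n+1)) (Fin (n+1)) ℂ) :=
  skewAdjointMatricesLieSubalgebra (1 : Matrix (Fin (n+1)) (Fin (n+1)) ℂ)

/-- The universal enveloping algebra U(𝔬(n+1,ℂ)). -/
abbrev Ug (n : ℕ) := UniversalEnvelopingAlgebra ℂ (so n)

/-- The matrix X_{ij} = E_{ij} - E_{ji}. -/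
def Xmat (n : ℕ) (i j : Fin (n+1)) : Matrix (Fin (n+1)) (Fin (n+1)) ℂ :=
  Matrix.single i j 1 - Matrix.single j i 1

lemma Xmat_mem (n : ℕ) (i j : Fin (n+1)) : Xmat n i j ∈ so n := by
  rw [mem_skewAdjointMatricesLieSubalgebra, mem_skewAdjointMatricesSubmodule]
  show (Xmat n i j)ᵀ * 1 = 1 * (-(Xmat n i j))
  rw [Matrix.mul_one, Matrix.one_mul]
  have h : ∀ (a b : Fin (n+1)), (Matrix.single a b (1:ℂ))ᵀ = Matrix.single b a 1 := by
    intro a b; ext x y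
    simp [Matrix.single, Matrix.transpose_apply, and_comm]
  simp [Xmat, Matrix.transpose_sub, h]

/-- X_{ij} as an element of 𝔬(n+1,ℂ). -/
def Xel (n : ℕ) (i j : Fin (n+1)) : so n := ⟨Xmat n i j, Xmat_mem n i j⟩

/-- X_{ij} as an element of U(𝔬(n+1,ℂ)). -/
def XU (n : ℕ) (i j : Fin (n+1)) : Ug n :=
  UniversalEnvelopingAlgebra.ι ℂ (Xel n i j)

/-- F = ℂ^{n+1}, the standard representation space. -/
abbrev Fstd (n : ℕ) := Fin (n+1) → ℂ

section ModuleSetup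

variable (n : ℕ) (M : Type*) [AddCommGroup M] [Module ℂ M]
  [Module (Ug n) M] [IsScalarTower ℂ (Ug n) M]

/-- The action of an element x ∈ U(𝔤) on the module M, as a ℂ-linear endomorphism. -/
def actM (x : Ug n) : Module.End ℂ M where
  toFun u := x • u
  map_add' := smul_add x
  map_smul' c u := smul_comm x c u

/-- The diagonal action of X ∈ 𝔬(n+1,ℂ) on M ⊗ F :
X·(u⊗f) := (X·u)⊗f + u⊗(Xf), where X acts on M through ι : 𝔤 → U(𝔤)
and on F = ℂ^{n+1} by matrix multiplication. -/
def actT (X : so n) : Module.End ℂ (M ⊗[ℂ] Fstd n) :=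
  LinearMap.rTensor (Fstd n) (actM n M (UniversalEnvelopingAlgebra.ι ℂ X)) +
  LinearMap.lTensor M (Matrix.mulVecLin (X : Matrix (Fin (n+1)) (Fin (n+1)) ℂ))

/-- The Casimir operator 𝒞(t) = −∑_{0 ≤ i < j ≤ n} X_{ij}·(X_{ij}·t) on M ⊗ F. -/
def CasT : Module.End ℂ (M ⊗[ℂ] Fstd n) :=
  -∑ i : Fin (n+1), ∑ j ∈ Finset.Ioi i, actT n M (Xel n i j) * actT n M (Xel n i j)

end ModuleSetup

/-- ρ = ((n−1)/2, (n−3)/2, …, (n+1)/2 − r) ∈ ℂ^r, where r = ⌊(n+1)/2⌋. -/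
def rhoWt (n : ℕ) : Fin ((n+1)/2) → ℂ := fun k => ((n : ℂ) - 1) / 2 - (k : ℕ)

/-- ‖μ‖² = ∑_k μ_k². -/
def normSq {r : ℕ} (μ : Fin r → ℂ) : ℂ := ∑ k, μ k ^ 2

/-- Δ(F) = {±e_k : 1 ≤ k ≤ r} (n odd), resp. {±e_k : 1 ≤ k ≤ r} ∪ {0} (n even),
as a finite set of vectors in ℂ^r, r = ⌊(n+1)/2⌋. -/
def DeltaF (n : ℕ) : Finset (Fin ((n+1)/2) → ℂ) :=
  (Finset.univ.image fun k : Fin ((n+1)/2) => (Pi.single k 1 : Fin ((n+1)/2) → ℂ)) ∪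
  (Finset.univ.image fun k : Fin ((n+1)/2) => -(Pi.single k 1 : Fin ((n+1)/2) → ℂ)) ∪
  (if Even n then {0} else ∅)

lemma fac_commute {V : Type*} [AddCommGroup V] [Module ℂ V]
    (T : Module.End ℂ V) (s t : ℂ) :
    Commute ((1/2 : ℂ) • (T - s • 1)) ((1/2 : ℂ) • (T - t • 1)) := by
  have h1 : Commute T (T - t • (1 : Module.End ℂ V)) :=
    (Commute.refl T).sub_right ((Commute.one_right T).smul_right t)
  have h2 : Commute (s • (1 : Module.End ℂ V)) (T - t • (1 : Module.End ℂ V)) :=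
    (((Commute.one_left T).smul_left s).sub_right
      (((Commute.refl (1 : Module.End ℂ V)).smul_left s).smul_right t))
  exact ((h1.sub_left h2).smul_left _).smul_right _

/-- The operator φ = ∏_{μ ∈ Δ(F), μ ≠ ε e_i} ½(𝒞 − (‖λ+μ‖² − ‖ρ‖²)·id) on M ⊗ F. -/
def phiOp (n : ℕ) (M : Type*) [AddCommGroup M] [Module ℂ M]
    [Module (Ug n) M] [IsScalarTower ℂ (Ug n) M]
    (lam : Fin ((n+1)/2) → ℂ) (i : Fin ((n+1)/2)) (ε : ℂ) :
    Module.End ℂ (M ⊗[ℂ] Fstd n) :=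
  ((DeltaF n).erase (ε • (Pi.single i 1 : Fin ((n+1)/2) → ℂ))).noncommProd
    (fun μ => (1/2 : ℂ) • (CasT n M - (normSq (lam + μ) - normSq (rhoWt n)) • 1))
    (fun μ _ ν _ _ => fac_commute _ _ _)

/-- The scalar φ_{i,ε}(λ): 2ελ_i ∏_{j≠i}(λ_i−λ_j)(λ_i+λ_j) if n = 2r−1 is odd,
and (2λ_i+ε)λ_i ∏_{j≠i}(λ_i−λ_j)(λ_i+λ_j) if n = 2r is even. -/
def phiScalar (n : ℕ) (i : Fin ((n+1)/2)) (ε : ℂ) (lam : Fin ((n+1)/2) → ℂ) : ℂ :=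
  (if Even n then (2 * lam i + ε) * lam i else 2 * ε * lam i) *
  ∏ j ∈ Finset.univ.erase i, ((lam i - lam j) * (lam i + lam j))

section AuxOps

variable {V : Type*} [AddCommGroup V] [Module ℂ V] {ι : Type*}

lemma noncommProd_apply_smul (f : ι → Module.End ℂ V) (hc : ∀ a b, Commute (f a) (f b))
    (c : ι → ℂ) (x : V) (s : Finset ι) (h : ∀ μ ∈ s, f μ x = c μ • x) :
    s.noncommProd f (fun a _ b _ _ => hc a b) x = (∏ μ ∈ s, c μ) • x := by
  induction s using Finset.cons_induction with
  | empty => erw [Finset.noncommProd_empty]; simp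
  | cons a s ha ih =>
    erw [Finset.noncommProd_cons, Finset.prod_cons, Module.End.mul_apply,
      ih (fun μ hμ => h μ (Finset.mem_cons_of_mem hμ)), _root_.map_smul,
      h a (Finset.mem_cons_self a s), smul_smul, mul_comm]

lemma noncommProd_apply_mem (f : ι → Module.End ℂ V) (hc : ∀ a b, Commute (f a) (f b))
    (Nsub : Submodule ℂ V) (s : Finset ι) (h : ∀ μ ∈ s, ∀ y ∈ Nsub, f μ y ∈ Nsub)
    (x : V) (hx : x ∈ Nsub) : s.noncommProd f (fun a _ b _ _ => hc a b) x ∈ Nsub := by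
  induction s using Finset.cons_induction with
  | empty => erw [Finset.noncommProd_empty]; simpa using hx
  | cons a s ha ih =>
    erw [Finset.noncommProd_cons, Module.End.mul_apply]
    exact h a (Finset.mem_cons_self a s) _ (ih (fun μ hμ => h μ (Finset.mem_cons_of_mem hμ)))

lemma pow_apply_smul (A : Module.End ℂ V) (s : ℂ) (x : V) (h : A x = s • x) (N : ℕ) :
    (A ^ N) x = s ^ N • x := by
  induction N with
  | zero => simp
  | succ N ih =>
    rw [pow_succ, Module.End.mul_apply, h, _root_.map_smul, ih, smul_smul, ← pow_succ']

lemma pow_apply_mem (A : Module.End ℂ V) (Nsub : Submodule ℂ V)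
    (h : ∀ y ∈ Nsub, A y ∈ Nsub) (k : ℕ) (x : V) (hx : x ∈ Nsub) : (A ^ k) x ∈ Nsub := by
  induction k with
  | zero => simpa using hx
  | succ k ih => rw [pow_succ', Module.End.mul_apply]; exact h _ ih

end AuxOps

section AuxSingle

lemma single_inj {r : ℕ} :
    Function.Injective (fun k : Fin r => (Pi.single k 1 : Fin r → ℂ)) := by
  intro k l h
  by_contra hkl
  have h2 := congrFun h k
  simp only [Pi.single_eq_same, Pi.single_eq_of_ne hkl] at h2
  exact one_ne_zero h2

lemma single_ne_neg {r : ℕ} (k l : Fin r) :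
    (Pi.single k 1 : Fin r → ℂ) ≠ -Pi.single l 1 := by
  intro h
  have h2 := congrFun h k
  rcases eq_or_ne k l with rfl | hkl
  · simp only [Pi.single_eq_same, Pi.neg_apply] at h2
    norm_num at h2
  · simp only [Pi.single_eq_same, Pi.neg_apply, Pi.single_eq_of_ne hkl, neg_zero] at h2
    exact one_ne_zero h2

lemma single_ne_zero' {r : ℕ} (k : Fin r) : (Pi.single k 1 : Fin r → ℂ) ≠ 0 := by
  intro h
  have h2 := congrFun h k
  simp only [Pi.single_eq_same, Pi.zero_apply] at h2
  exact one_ne_zero h2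

lemma neg_single_ne_zero' {r : ℕ} (k : Fin r) : -(Pi.single k 1 : Fin r → ℂ) ≠ 0 := by
  intro h
  exact single_ne_zero' k (by rw [← neg_neg (Pi.single k 1 : Fin r → ℂ), h, neg_zero])

lemma normSq_add_smul_single {r : ℕ} (lam : Fin r → ℂ) (k : Fin r) (δ : ℂ) :
    normSq (lam + δ • (Pi.single k 1 : Fin r → ℂ)) = normSq lam + (2 * δ * lam k + δ ^ 2) := by
  unfold normSq
  have h : ∀ m, ((lam + δ • (Pi.single k 1 : Fin r → ℂ)) m) ^ 2
      = lam m ^ 2 + (if m = k then 2 * δ * lam k + δ ^ 2 else 0) := by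
    intro m
    rcases eq_or_ne m k with rfl | hm
    · rw [if_pos rfl]
      simp only [Pi.add_apply, Pi.smul_apply, Pi.single_eq_same, smul_eq_mul]
      ring
    · rw [if_neg hm]
      simp only [Pi.add_apply, Pi.smul_apply, Pi.single_eq_of_ne hm, smul_eq_mul]
      ring
  rw [Finset.sum_congr rfl (fun m _ => h m), Finset.sum_add_distrib,
    Finset.sum_ite_eq' Finset.univ k _, if_pos (Finset.mem_univ k)]

end AuxSingle

lemma prod_erase_eq_prod_ite {α : Type*} [DecidableEq α] (S : Finset α) (a : α)
    (g : α → ℂ) (ha : a ∈ S) :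
    ∏ μ ∈ S.erase a, g μ = ∏ μ ∈ S, (if μ = a then 1 else g μ) := by
  rw [← Finset.mul_prod_erase S _ ha, if_pos rfl, one_mul]
  exact (Finset.prod_congr rfl fun μ hμ => if_neg (Finset.mem_erase.1 hμ).1).symm

lemma smul_single_mem_DeltaF (n : ℕ) (i : Fin ((n+1)/2)) (ε : ℂ) (hε : ε = 1 ∨ ε = -1) :
    ε • (Pi.single i 1 : Fin ((n+1)/2) → ℂ) ∈ DeltaF n := by
  rcases hε with rfl | rfl
  · exact Finset.mem_union_left _ (Finset.mem_union_left _
      (Finset.mem_image.2 ⟨i, Finset.mem_univ i, (one_smul ℂ _).symm⟩))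
  · exact Finset.mem_union_left _ (Finset.mem_union_right _
      (Finset.mem_image.2 ⟨i, Finset.mem_univ i, (neg_one_smul ℂ _).symm⟩))

lemma disjoint_AB (r : ℕ) : Disjoint
    ((Finset.univ.image fun k : Fin r => (Pi.single k 1 : Fin r → ℂ)) : Finset _)
    (Finset.univ.image fun k : Fin r => -(Pi.single k 1 : Fin r → ℂ)) := by
  rw [Finset.disjoint_left]
  rintro x hx hx'
  obtain ⟨k, -, rfl⟩ := Finset.mem_image.1 hx
  obtain ⟨l, -, hl⟩ := Finset.mem_image.1 hx'
  exact single_ne_neg k l hl.symm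

lemma disjoint_ABZ (n : ℕ) : Disjoint
    (((Finset.univ.image fun k : Fin ((n+1)/2) => (Pi.single k 1 : Fin ((n+1)/2) → ℂ)) ∪
      (Finset.univ.image fun k : Fin ((n+1)/2) => -(Pi.single k 1 : Fin ((n+1)/2) → ℂ))) : Finset _)
    (if Even n then ({0} : Finset (Fin ((n+1)/2) → ℂ)) else ∅) := by
  split_ifs
  · rw [Finset.disjoint_singleton_right]
    intro hx
    rcases Finset.mem_union.1 hx with hx' | hx'
    · obtain ⟨k, -, hk⟩ := Finset.mem_image.1 hx'
      exact single_ne_zero' k hk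
    · obtain ⟨k, -, hk⟩ := Finset.mem_image.1 hx'
      exact neg_single_ne_zero' k hk
  · exact Finset.disjoint_empty_right _

lemma prod_DeltaF_erase (n : ℕ) (i : Fin ((n+1)/2)) (ε : ℂ) (hε : ε = 1 ∨ ε = -1)
    (g : (Fin ((n+1)/2) → ℂ) → ℂ) :
    ∏ μ ∈ (DeltaF n).erase (ε • (Pi.single i 1 : Fin ((n+1)/2) → ℂ)), g μ =
      (if Even n then g 0 else 1) *
        g (-(ε • (Pi.single i 1 : Fin ((n+1)/2) → ℂ))) *
        ∏ k ∈ Finset.univ.erase i,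
          (g (Pi.single k 1) * g (-(Pi.single k 1 : Fin ((n+1)/2) → ℂ))) := by
  have heV := smul_single_mem_DeltaF n i ε hε
  rw [prod_erase_eq_prod_ite _ _ _ heV,
    show DeltaF n = _ ∪ _ ∪ _ from rfl, Finset.prod_union (disjoint_ABZ n),
    Finset.prod_union (disjoint_AB ((n+1)/2)),
    Finset.prod_image (fun k _ l _ hkl => single_inj hkl),
    Finset.prod_image (fun k _ l _ hkl => single_inj (neg_injective hkl))]
  beta_reduce
  rcases hε with rfl | rfl
  · simp only [one_smul]
    have hZeq : (∏ μ ∈ (if Even n then ({0} : Finset (Fin ((n+1)/2) → ℂ)) else ∅),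
        (if μ = (Pi.single i 1 : Fin ((n+1)/2) → ℂ) then 1 else g μ)) =
        if Even n then g 0 else 1 := by
      split_ifs
      · rw [Finset.prod_singleton, if_neg (fun hc => single_ne_zero' i hc.symm)]
      · exact Finset.prod_empty
    have hAeq : (∏ k : Fin ((n+1)/2),
        (if (Pi.single k 1 : Fin ((n+1)/2) → ℂ) = Pi.single i 1 then 1 else g (Pi.single k 1))) =
        ∏ k ∈ Finset.univ.erase i, g (Pi.single k 1) := by
      rw [← Finset.mul_prod_erase Finset.univ _ (Finset.mem_univ i), if_pos rfl, one_mul]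
      exact Finset.prod_congr rfl fun k hk =>
        if_neg (fun hc => (Finset.mem_erase.1 hk).1 (single_inj hc))
    have hBeq : (∏ k : Fin ((n+1)/2),
        (if -(Pi.single k 1 : Fin ((n+1)/2) → ℂ) = Pi.single i 1 then 1
          else g (-(Pi.single k 1)))) =
        g (-(Pi.single i 1 : Fin ((n+1)/2) → ℂ)) *
          ∏ k ∈ Finset.univ.erase i, g (-(Pi.single k 1)) := by
      rw [Finset.prod_congr rfl (fun k _ =>
        if_neg (fun hc => single_ne_neg i k hc.symm)),
        ← Finset.mul_prod_erase Finset.univ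
          (fun k => g (-(Pi.single k 1 : Fin ((n+1)/2) → ℂ))) (Finset.mem_univ i)]
    rw [hZeq, hAeq, hBeq, Finset.prod_mul_distrib]
    ring
  · have hneg : (-1 : ℂ) • (Pi.single i 1 : Fin ((n+1)/2) → ℂ) = -(Pi.single i 1) :=
      neg_one_smul ℂ _
    rw [hneg, neg_neg]
    have hZeq : (∏ μ ∈ (if Even n then ({0} : Finset (Fin ((n+1)/2) → ℂ)) else ∅),
        (if μ = -(Pi.single i 1 : Fin ((n+1)/2) → ℂ) then 1 else g μ)) =
        if Even n then g 0 else 1 := by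
      split_ifs
      · rw [Finset.prod_singleton, if_neg (fun hc => neg_single_ne_zero' i hc.symm)]
      · exact Finset.prod_empty
    have hAeq : (∏ k : Fin ((n+1)/2),
        (if (Pi.single k 1 : Fin ((n+1)/2) → ℂ) = -(Pi.single i 1) then 1
          else g (Pi.single k 1))) =
        g (Pi.single i 1 : Fin ((n+1)/2) → ℂ) *
          ∏ k ∈ Finset.univ.erase i, g (Pi.single k 1) := by
      rw [Finset.prod_congr rfl (fun k _ =>
        if_neg (single_ne_neg k i)),
        ← Finset.mul_prod_erase Finset.univ
          (fun k => g (Pi.single k 1 : Fin ((n+1)/2) → ℂ)) (Finset.mem_univ i)]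
    have hBeq : (∏ k : Fin ((n+1)/2),
        (if -(Pi.single k 1 : Fin ((n+1)/2) → ℂ) = -(Pi.single i 1) then 1
          else g (-(Pi.single k 1)))) =
        ∏ k ∈ Finset.univ.erase i, g (-(Pi.single k 1)) := by
      rw [← Finset.mul_prod_erase Finset.univ _ (Finset.mem_univ i), if_pos rfl, one_mul]
      exact Finset.prod_congr rfl fun k hk =>
        if_neg (fun hc => (Finset.mem_erase.1 hk).1 (single_inj (neg_injective hc)))
    rw [hZeq, hAeq, hBeq, Finset.prod_mul_distrib]
    ring

lemma phiScalar_eq (n : ℕ) (lam : Fin ((n+1)/2) → ℂ) (i : Fin ((n+1)/2)) (ε : ℂ)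
    (hε : ε = 1 ∨ ε = -1) :
    ∏ μ ∈ (DeltaF n).erase (ε • (Pi.single i 1 : Fin ((n+1)/2) → ℂ)),
      ((1/2 : ℂ) * ((normSq (lam + ε • (Pi.single i 1 : Fin ((n+1)/2) → ℂ)) - normSq (rhoWt n))
        - (normSq (lam + μ) - normSq (rhoWt n)))) = phiScalar n i ε lam := by
  have hε2 : ε ^ 2 = 1 := by rcases hε with rfl | rfl <;> norm_num
  rw [prod_DeltaF_erase n i ε hε]
  have hS : normSq (lam + ε • (Pi.single i 1 : Fin ((n+1)/2) → ℂ))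
      = normSq lam + (2 * ε * lam i + ε ^ 2) := normSq_add_smul_single lam i ε
  have e1 : ∀ k : Fin ((n+1)/2), normSq (lam + Pi.single k 1)
      = normSq lam + (2 * lam k + 1) := by
    intro k
    have := normSq_add_smul_single lam k 1
    rw [one_smul] at this
    rw [this]; ring
  have e2 : ∀ k : Fin ((n+1)/2), normSq (lam + -(Pi.single k 1 : Fin ((n+1)/2) → ℂ))
      = normSq lam + (-(2 * lam k) + 1) := by
    intro k
    have := normSq_add_smul_single lam k (-1)
    rw [neg_one_smul] at this
    rw [this]; ring
  have e4 : normSq (lam + -(ε • (Pi.single i 1 : Fin ((n+1)/2) → ℂ)))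
      = normSq lam + (-(2 * ε * lam i) + ε ^ 2) := by
    have := normSq_add_smul_single lam i (-ε)
    rw [neg_smul] at this
    rw [this]; ring
  have key : ∀ (a b : ℂ) (F G : Fin ((n+1)/2) → ℂ), a = b → (∀ k, F k = G k) →
      a * ∏ k ∈ Finset.univ.erase i, F k = b * ∏ k ∈ Finset.univ.erase i, G k := by
    intro a b F G hab hFG
    rw [hab, Finset.prod_congr rfl fun k _ => hFG k]
  simp only [hS, e4, add_zero, e1, e2]
  unfold phiScalar
  by_cases hn : Even n
  · rw [if_pos hn, if_pos hn]
    refine key _ _ _ _ ?_ fun k => ?_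
    · linear_combination (2 * lam i ^ 2 + ε * lam i : ℂ) * hε2
    · linear_combination (lam i ^ 2 + ε * lam i + ε ^ 2 / 4 - 1 / 4 : ℂ) * hε2
  · rw [if_neg hn, if_neg hn]
    refine key _ _ _ _ ?_ fun k => ?_
    · ring
    · linear_combination (lam i ^ 2 + ε * lam i + ε ^ 2 / 4 - 1 / 4 : ℂ) * hε2

lemma smul_sub_smul_one_apply {V : Type*} [AddCommGroup V] [Module ℂ V]
    (A : Module.End ℂ V) (a c : ℂ) (y : V) (h : A y = a • y) :
    ((1/2 : ℂ) • (A - c • 1)) y = ((1/2 : ℂ) * (a - c)) • y := by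
  rw [LinearMap.smul_apply, LinearMap.sub_apply, LinearMap.smul_apply, Module.End.one_apply, h,
    ← sub_smul, smul_smul]

lemma smul_pow_apply_eq_zero {V : Type*} [AddCommGroup V] [Module ℂ V]
    (A : Module.End ℂ V) (c : ℂ) (y : V) (ℓ N : ℕ) (hN : ℓ ≤ N) (h : (A ^ ℓ) y = 0) :
    ((c • A) ^ N) y = 0 := by
  rw [smul_pow, LinearMap.smul_apply]
  have h2 : (A ^ N) y = 0 := by
    rw [show N = (N - ℓ) + ℓ from (Nat.sub_add_cancel hN).symm, pow_add, Module.End.mul_apply, h,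
      map_zero]
  rw [h2, smul_zero]

/-- Suppose M⊗F = ⊕_{τ ∈ Δ(F)} N_τ is a direct sum decomposition into 𝒞-invariant
subspaces, that there exists ℓ₀ ≥ 1 such that (𝒞 − (‖λ+τ‖² − ‖ρ‖²)·id)^{ℓ₀} vanishes on
N_τ for every τ ∈ Δ(F), and moreover that 𝒞 acts on N_{ε e_i} by the scalar
‖λ+εe_i‖² − ‖ρ‖².  Then for every N ≥ ℓ₀ one has φ^N = φ_{i,ε}(λ)^N · P, where P is the
linear projection onto N_{ε e_i} along ⊕_{τ ∈ Δ(F), τ ≠ ε e_i} N_τ. -/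
theorem phiOp_pow_eq_scalar_pow_smul_proj (n : ℕ) (M : Type*) [AddCommGroup M] [Module ℂ M]
    [Module (Ug n) M] [IsScalarTower ℂ (Ug n) M]
    (lam : Fin ((n+1)/2) → ℂ) (i : Fin ((n+1)/2)) (ε : ℂ) (hε : ε = 1 ∨ ε = -1)
    (Nfam : (Fin ((n+1)/2) → ℂ) → Submodule ℂ (M ⊗[ℂ] Fstd n))
    (hinternal : DirectSum.IsInternal fun τ : {τ // τ ∈ DeltaF n} => Nfam τ.1)
    (hinv : ∀ τ ∈ DeltaF n, ∀ x ∈ Nfam τ, CasT n M x ∈ Nfam τ)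
    (ℓ₀ : ℕ) (hℓ₀ : 1 ≤ ℓ₀)
    (hnil : ∀ τ ∈ DeltaF n, ∀ x ∈ Nfam τ,
      ((CasT n M - (normSq (lam + τ) - normSq (rhoWt n)) • 1) ^ ℓ₀) x = 0)
    (hscalar : ∀ x ∈ Nfam (ε • (Pi.single i 1 : Fin ((n+1)/2) → ℂ)),
      CasT n M x =
        (normSq (lam + ε • (Pi.single i 1 : Fin ((n+1)/2) → ℂ)) - normSq (rhoWt n)) • x)
    (P : Module.End ℂ (M ⊗[ℂ] Fstd n))
    (hP : ∀ τ ∈ DeltaF n, ∀ x ∈ Nfam τ,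
      P x = if τ = ε • (Pi.single i 1 : Fin ((n+1)/2) → ℂ) then x else 0) :
    ∀ N : ℕ, ℓ₀ ≤ N →
      phiOp n M lam i ε ^ N = phiScalar n i ε lam ^ N • P := by
  intro N hN
  set f : (Fin ((n+1)/2) → ℂ) → Module.End ℂ (M ⊗[ℂ] Fstd n) :=
    fun μ => (1/2 : ℂ) • (CasT n M - (normSq (lam + μ) - normSq (rhoWt n)) • 1) with hf
  have hcomm : ∀ a b, Commute (f a) (f b) := fun a b => fac_commute _ _ _
  have hphi : phiOp n M lam i ε =
      ((DeltaF n).erase (ε • (Pi.single i 1 : Fin ((n+1)/2) → ℂ))).noncommProd f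
        (fun a _ b _ _ => hcomm a b) := rfl
  have key : ∀ τ ∈ DeltaF n, ∀ x ∈ Nfam τ,
      (phiOp n M lam i ε ^ N) x = phiScalar n i ε lam ^ N • P x := by
    intro τ hτ x hx
    by_cases hτe : τ = ε • (Pi.single i 1 : Fin ((n+1)/2) → ℂ)
    · subst hτe
      have hfx : ∀ μ ∈ (DeltaF n).erase (ε • (Pi.single i 1 : Fin ((n+1)/2) → ℂ)), f μ x =
          ((1/2 : ℂ) * ((normSq (lam + ε • (Pi.single i 1 : Fin ((n+1)/2) → ℂ))
            - normSq (rhoWt n)) - (normSq (lam + μ) - normSq (rhoWt n)))) • x := by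
        intro μ hμ
        exact smul_sub_smul_one_apply (CasT n M) _ _ x (hscalar x hx)
      have hφ : phiOp n M lam i ε x = phiScalar n i ε lam • x := by
        rw [hphi, noncommProd_apply_smul f hcomm _ x _ hfx, phiScalar_eq n lam i ε hε]
      rw [pow_apply_smul _ _ _ hφ N, hP _ hτ x hx, if_pos rfl]
    · have hτ' : τ ∈ (DeltaF n).erase (ε • (Pi.single i 1 : Fin ((n+1)/2) → ℂ)) :=
        Finset.mem_erase.2 ⟨hτe, hτ⟩
      set s' := ((DeltaF n).erase (ε • (Pi.single i 1 : Fin ((n+1)/2) → ℂ))).erase τ with hs'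
      have hψdef : phiOp n M lam i ε
          = f τ * s'.noncommProd f (fun a _ b _ _ => hcomm a b) := by
        rw [hphi, ← Finset.mul_noncommProd_erase _ hτ' f (fun a _ b _ _ => hcomm a b)]
      have hcommψ : Commute (f τ) (s'.noncommProd f (fun a _ b _ _ => hcomm a b)) :=
        Finset.noncommProd_commute _ _ _ _ (fun μ _ => hcomm τ μ)
      have hpow : phiOp n M lam i ε ^ N
          = f τ ^ N * (s'.noncommProd f (fun a _ b _ _ => hcomm a b)) ^ N := by
        rw [hψdef, hcommψ.mul_pow]
      have hpres : ∀ μ, ∀ y ∈ Nfam τ, f μ y ∈ Nfam τ := by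
        intro μ y hy
        exact Submodule.smul_mem _ _
          (Submodule.sub_mem _ (hinv τ hτ y hy) (Submodule.smul_mem _ _ hy))
      have hy : ((s'.noncommProd f (fun a _ b _ _ => hcomm a b)) ^ N) x ∈ Nfam τ :=
        pow_apply_mem _ _
          (fun y hy => noncommProd_apply_mem f hcomm _ s' (fun μ _ => hpres μ) y hy) N x hx
      have hzero : (f τ ^ N) (((s'.noncommProd f (fun a _ b _ _ => hcomm a b)) ^ N) x) = 0 :=
        smul_pow_apply_eq_zero _ _ _ ℓ₀ N hN (hnil τ hτ _ hy)
      rw [hpow, Module.End.mul_apply, hzero, hP τ hτ x hx, if_neg hτe, smul_zero]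
  apply LinearMap.ext
  intro x
  have hx : x ∈ ⨆ (τ : {τ // τ ∈ DeltaF n}), Nfam τ.1 := by
    rw [hinternal.submodule_iSup_eq_top]; exact Submodule.mem_top
  rw [LinearMap.smul_apply]
  refine Submodule.iSup_induction (motive := fun y => (phiOp n M lam i ε ^ N) y
      = phiScalar n i ε lam ^ N • P y) _ hx (fun τ y hy => key τ.1 τ.2 y hy) (by simp) ?_
  intro y z hy hz
  rw [map_add, hy, hz, map_add, smul_add]
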